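/- Let n = p_1^{α_1}···p_r^{α_r} with distinct primes p_1 < ··· < p_r and r ≥ 2, and let x ∈ C_n have order p_k^β for some 1 ≤ k ≤ r, 1 ≤ β ≤ α_k. Then |N([x])| = p_k^β − 2φ(p_k^β) + (p_k^{α_k} − p_k^{β−1})·∏_{j≠k} p_j^{α_j}. -/

import Mathlib

/-- The power graph of a group: distinct vertices are adjacent iff
one is a power of the other. -/
def powerGraph (G : Type*) [Group G] : SimpleGraph G where
  Adj x y := x ≠ y ∧ (x ∈ Subgroup.zpowers y ∨ y ∈ Subgroup.zpowers x)
  symm := ⟨fun x y h => ⟨h.1.symm, h.2.symm⟩⟩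
  loopless := ⟨fun x h => h.1 rfl⟩

/-- `v` lies in a connected component containing a cycle. -/
def InCyclicComp {V : Type*} (Γ : SimpleGraph V) (v : V) : Prop :=
  ∃ w, Γ.Reachable v w ∧ ∃ c : Γ.Walk w w, c.IsCycle

/-- `S` is a cyclic vertex cutset: `Γ - S` is disconnected with at least two
components containing cycles. -/
def IsCyclicCutset {V : Type*} (Γ : SimpleGraph V) (S : Set V) : Prop :=
  ∃ u v : ↥(Sᶜ), ¬ (Γ.induce Sᶜ).Reachable u v ∧
    InCyclicComp (Γ.induce Sᶜ) u ∧ InCyclicComp (Γ.induce Sᶜ) v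

/-- A graph is cyclically separable if it has a cyclic vertex cutset. -/
def CyclicallySeparable {V : Type*} (Γ : SimpleGraph V) : Prop :=
  ∃ S : Set V, IsCyclicCutset Γ S

/-- Vertex connectivity: the least number of vertices whose deletion
disconnects the graph or reduces it to at most one vertex. -/
noncomputable def vertexConn {V : Type*} (Γ : SimpleGraph V) : ℕ :=
  sInf {k | ∃ S : Set V, S.ncard = k ∧
    (¬ (Γ.induce Sᶜ).Connected ∨ Sᶜ.Subsingleton)}

/-- Cyclic vertex connectivity: the least cardinality of a cyclic vertex
cutset, `∞` if there is none. -/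
noncomputable def cyclicVertexConn {V : Type*} (Γ : SimpleGraph V) : ℕ∞ :=
  sInf {k : ℕ∞ | ∃ S : Set V, IsCyclicCutset Γ S ∧ k = (S.ncard : ℕ∞)}

/-- `genClass x` is `[x]`, the set of generators of `⟨x⟩`. -/
def genClass {G : Type*} [Group G] (x : G) : Set G :=
  {y | Subgroup.zpowers y = Subgroup.zpowers x}

/-- Neighbourhood of a set of vertices. -/
def setNbhd {V : Type*} (Γ : SimpleGraph V) (A : Set V) : Set V :=
  {v | v ∉ A ∧ ∃ a ∈ A, Γ.Adj v a}

/-! In a finite cyclic group `y ∈ ⟨z⟩` iff the order of `y` divides that of `z`, so `[x]` is the set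
of elements of order `m = orderOf x`, and `N([x])` consists of the elements whose order divides `m`
or is divisible by `m`, minus `[x]`. Inclusion–exclusion gives
`|N([x])| = m + #{v | m ∣ orderOf v} - 2 φ(m)`. For `m = p ^ β` and `n = p ^ a * M` with `p ∤ M`, the
elements whose order is not divisible by `p ^ β` form the subgroup of order `p ^ (β - 1) * M`. -/

theorem Nat.pow_succ_dvd_iff_not_dvd_pow_mul {p a β M d : ℕ} (hp : p.Prime) (hpM : p.Coprime M)
    (hd : d ∣ p ^ a * M) : p ^ (β + 1) ∣ d ↔ ¬ d ∣ p ^ β * M := by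
  constructor
  · intro hβ hdβ
    have : p ^ β * p ∣ p ^ β * M := (pow_succ p β ▸ hβ).trans hdβ
    exact hp.one_lt.ne' (hpM.eq_one_of_dvd (Nat.dvd_of_mul_dvd_mul_left (pow_pos hp.pos β) this))
  · rw [← not_imp_not, not_not]
    intro hβ
    obtain ⟨y, z, hy, hz, rfl⟩ := Nat.dvd_mul.mp hd
    obtain ⟨γ, -, rfl⟩ := (Nat.dvd_prime_pow hp).mp hy
    have hγ : γ ≤ β := by
      by_contra! hγ
      exact hβ (Dvd.dvd.mul_right (pow_dvd_pow p hγ) z)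
    exact mul_dvd_mul (pow_dvd_pow p hγ) hz

section FiniteCyclic

variable {G : Type*} [Group G] [Finite G] [IsCyclic G]

lemma zpowers_eq_setOf_pow_orderOf_eq_one (b : G) :
    (Subgroup.zpowers b : Set G) = {g | g ^ orderOf b = 1} := by
  classical
  have := Fintype.ofFinite G
  refine Set.eq_of_subset_of_ncard_le (fun g ⟨k, hk⟩ => ?_) ?_
  · rw [Set.mem_ofPred_eq, ← hk, ← zpow_natCast, ← zpow_mul, mul_comm, zpow_mul, zpow_natCast,
      pow_orderOf_eq_one, one_zpow]
  · rw [← Nat.card_coe_set_eq (Subgroup.zpowers b : Set G), SetLike.coe_sort_coe, Nat.card_zpowers,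
      Set.ncard_eq_toFinset_card', Set.toFinset_ofPred]
    exact IsCyclic.card_pow_eq_one_le (orderOf_pos b)

lemma mem_zpowers_iff_orderOf_dvd {a b : G} : a ∈ Subgroup.zpowers b ↔ orderOf a ∣ orderOf b := by
  rw [← SetLike.mem_coe, zpowers_eq_setOf_pow_orderOf_eq_one, Set.mem_ofPred_eq,
    orderOf_dvd_iff_pow_eq_one]

lemma zpowers_eq_zpowers_iff_orderOf_eq {a b : G} :
    Subgroup.zpowers a = Subgroup.zpowers b ↔ orderOf a = orderOf b := by
  refine ⟨fun h => by rw [← Nat.card_zpowers, h, Nat.card_zpowers], fun h => ?_⟩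
  apply le_antisymm <;> rw [Subgroup.zpowers_le, mem_zpowers_iff_orderOf_dvd, h]

lemma genClass_eq_setOf_orderOf_eq (x : G) : genClass x = {v | orderOf v = orderOf x} := by
  ext v
  exact zpowers_eq_zpowers_iff_orderOf_eq

lemma ncard_genClass (x : G) : (genClass x).ncard = Nat.totient (orderOf x) := by
  classical
  have := Fintype.ofFinite G
  rw [genClass_eq_setOf_orderOf_eq, Set.ncard_eq_toFinset_card', Set.toFinset_ofPred]
  exact IsCyclic.card_orderOf_eq_totient orderOf_dvd_card

lemma ncard_setOf_orderOf_dvd {d : ℕ} (hd : d ∣ Nat.card G) :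
    {v : G | orderOf v ∣ d}.ncard = d := by
  obtain ⟨g, hg⟩ := IsCyclic.exists_ofOrder_eq_natCard (α := G)
  have hy : orderOf (g ^ (Nat.card G / d)) = d := by
    rw [← hg] at hd ⊢
    exact orderOf_pow_orderOf_div (orderOf_pos g).ne' hd
  have : {v : G | orderOf v ∣ d} = Subgroup.zpowers (g ^ (Nat.card G / d)) := by
    ext v
    rw [SetLike.mem_coe, mem_zpowers_iff_orderOf_dvd, hy, Set.mem_ofPred_eq]
  rw [this, ← Nat.card_coe_set_eq, SetLike.coe_sort_coe, Nat.card_zpowers, hy]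

lemma setNbhd_powerGraph_genClass (x : G) :
    setNbhd (powerGraph G) (genClass x) =
      ({v | orderOf v ∣ orderOf x} ∪ {v | orderOf x ∣ orderOf v}) \ genClass x := by
  ext v
  simp only [setNbhd, powerGraph, genClass_eq_setOf_orderOf_eq, mem_zpowers_iff_orderOf_dvd,
    Set.mem_sdiff, Set.mem_union, Set.mem_ofPred_eq]
  constructor
  · rintro ⟨hv, a, ha, -, hdvd⟩
    exact ⟨ha ▸ hdvd, hv⟩
  · rintro ⟨hdvd, hv⟩
    exact ⟨hv, x, rfl, fun h => hv (h ▸ rfl), hdvd⟩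

lemma ncard_setNbhd_powerGraph_genClass_add (x : G) :
    (setNbhd (powerGraph G) (genClass x)).ncard + 2 * Nat.totient (orderOf x) =
      orderOf x + {v : G | orderOf x ∣ orderOf v}.ncard := by
  have hinter : {v : G | orderOf v ∣ orderOf x} ∩ {v | orderOf x ∣ orderOf v} = genClass x := by
    ext v
    simp only [genClass_eq_setOf_orderOf_eq, Set.mem_inter_iff, Set.mem_ofPred_eq]
    exact ⟨fun ⟨h₁, h₂⟩ => Nat.dvd_antisymm h₁ h₂, fun h => ⟨h.dvd, h.symm.dvd⟩⟩
  have hsub : genClass x ⊆ {v | orderOf v ∣ orderOf x} ∪ {v | orderOf x ∣ orderOf v} :=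
    hinter ▸ Set.inter_subset_left.trans Set.subset_union_left
  have hunion := Set.ncard_union_add_ncard_inter {v : G | orderOf v ∣ orderOf x}
    {v | orderOf x ∣ orderOf v}
  rw [setNbhd_powerGraph_genClass, ← ncard_genClass, two_mul, ← add_assoc,
    Set.ncard_sdiff_add_ncard_of_subset hsub, ← hinter, hunion,
    ncard_setOf_orderOf_dvd (orderOf_dvd_natCard x)]

lemma ncard_setOf_pow_succ_dvd_orderOf_add {p a β M : ℕ} (hp : p.Prime) (hpM : p.Coprime M)
    (hG : Nat.card G = p ^ a * M) (hβ : β ≤ a) :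
    {v : G | p ^ (β + 1) ∣ orderOf v}.ncard + p ^ β * M = Nat.card G := by
  have hcompl : {v : G | p ^ (β + 1) ∣ orderOf v} = {v | orderOf v ∣ p ^ β * M}ᶜ := by
    ext v
    exact Nat.pow_succ_dvd_iff_not_dvd_pow_mul hp hpM (hG ▸ orderOf_dvd_natCard v)
  have hsplit := Set.ncard_add_ncard_compl {v : G | orderOf v ∣ p ^ β * M}
  rw [ncard_setOf_orderOf_dvd (hG ▸ mul_dvd_mul_right (pow_dvd_pow p hβ) M)] at hsplit
  rw [hcompl, ← hsplit, add_comm]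

end FiniteCyclic

theorem stmt3_general (n r : ℕ) [NeZero n] (p α : Fin r → ℕ)
    (hp : ∀ i, (p i).Prime) (hmono : StrictMono p)
    (hn : n = ∏ i, p i ^ α i)
    (k : Fin r) (β : ℕ) (hβ1 : 1 ≤ β) (hβ2 : β ≤ α k)
    (x : Multiplicative (ZMod n)) (hx : orderOf x = p k ^ β) :
    (setNbhd (powerGraph (Multiplicative (ZMod n))) (genClass x)).ncard
      = p k ^ β + (p k ^ α k - p k ^ (β - 1)) *
          (∏ j ∈ Finset.univ.erase k, p j ^ α j)
        - 2 * Nat.totient (p k ^ β) := by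
  obtain ⟨γ, rfl⟩ : ∃ γ, β = γ + 1 := ⟨β - 1, by omega⟩
  set M := ∏ j ∈ Finset.univ.erase k, p j ^ α j
  have hpM : (p k).Coprime M := Nat.Coprime.prod_right fun j hj =>
    Nat.Coprime.pow_right _ <| (Nat.coprime_primes (hp k) (hp j)).mpr fun h =>
      (Finset.mem_erase.mp hj).1 (hmono.injective h).symm
  have hcard : Nat.card (Multiplicative (ZMod n)) = p k ^ α k * M := by
    rw [Nat.card_eq_fintype_card, Fintype.card_multiplicative, ZMod.card, hn,
      ← Finset.mul_prod_erase _ _ (Finset.mem_univ k)]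
  have hnbhd := ncard_setNbhd_powerGraph_genClass_add x
  have hcount := ncard_setOf_pow_succ_dvd_orderOf_add (hp k) hpM hcard (by omega : γ ≤ α k)
  rw [hx] at hnbhd
  rw [hcard] at hcount
  rw [Nat.add_sub_cancel, Nat.sub_mul]
  omega

/-- Neighbourhood of the generator class of an element of prime power order. -/
theorem stmt3 (n r : ℕ) [NeZero n] (hr : 2 ≤ r) (p α : Fin r → ℕ)
    (hp : ∀ i, (p i).Prime) (hmono : StrictMono p) (hα : ∀ i, 1 ≤ α i)
    (hn : n = ∏ i, p i ^ α i)
    (k : Fin r) (β : ℕ) (hβ1 : 1 ≤ β) (hβ2 : β ≤ α k)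
    (x : Multiplicative (ZMod n)) (hx : orderOf x = p k ^ β) :
    (setNbhd (powerGraph (Multiplicative (ZMod n))) (genClass x)).ncard
      = p k ^ β + (p k ^ α k - p k ^ (β - 1)) *
          (∏ j ∈ Finset.univ.erase k, p j ^ α j)
        - 2 * Nat.totient (p k ^ β) :=
  stmt3_general n r p α hp hmono hn k β hβ1 hβ2 x hx
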